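/- arXiv:1707.09550 — 2 statements merged into one kernel-verified Lean document; each statement's English description precedes it below -/
import Mathlib

section
/- Let p ≥ 2 be an integer, let M : Z₀^(p) → ℂ be a multiplier that is symmetric in its last two variables, i.e. M(k₁,…,k_{p−1},k_p,k_{p+1}) = M(k₁,…,k_{p−1},k_{p+1},k_p), and let f, g : 𝕋 → ℂ be trigonometric polynomials (only finitely many nonzero Fourier coefficients). Then Γ^(p)((ik_p)³M; f,…,f,g,g) = −(1/2)·Γ^(p)((ik_{(1,p−1)})³M; f,…,f,g,g) + (3/2)·Γ^(p)((ik_{(1,p−1)})(ik_p)(ik_{p+1})M; f,…,f,g,g), where the first p−1 arguments are f and the last two are g. -/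
/- Integration-by-parts symmetry lemma for the multilinear forms Γ^(p) (third order). -/

namespace FifthOrderStmt8

/-- Fourier coefficient of a `2π`-periodic function `f : ℝ → ℂ`:
`f̂(k) = (1/2π) ∫_0^{2π} f(x) e^{-ikx} dx`. -/
noncomputable def fhat (f : ℝ → ℂ) (k : ℤ) : ℂ :=
  (Complex.ofReal (2 * Real.pi))⁻¹ *
    ∫ x in (0:ℝ)..(2 * Real.pi), f x * Complex.exp (-Complex.I * (k : ℂ) * (x : ℂ))

/-- The multilinear form
`Γ^(p)(M; f₁,…,f_{p+1}) = Σ_{k ∈ Z₀^(p)} M(k) ∏_{l=1}^{p+1} f̂_l(k_l)`,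
where `Z₀^(p) = {k ∈ ℤ^{p+1} : k₁ + ⋯ + k_{p+1} = 0}` (indices shifted to start at `0`). -/
noncomputable def Gam (p : ℕ) (M : (Fin (p + 1) → ℤ) → ℂ) (F : Fin (p + 1) → ℝ → ℂ) : ℂ :=
  ∑' k : {k : Fin (p + 1) → ℤ // (∑ i, k i) = 0}, M k.1 * ∏ i, fhat (F i) (k.1 i)

/-- The argument tuple `(f, …, f, g, g)`: `p − 1` copies of `f` followed by two copies of `g`. -/
def tup (p : ℕ) (f g : ℝ → ℂ) : Fin (p + 1) → ℝ → ℂ :=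
  fun i => if (i : ℕ) < p - 1 then f else g

lemma summable_aux (p : ℕ) (N : (Fin (p+1) → ℤ) → ℂ) (F : Fin (p+1) → ℝ → ℂ)
    (hF : ∀ i, {m : ℤ | fhat (F i) m ≠ 0}.Finite) :
    Summable (fun k : {k : Fin (p+1) → ℤ // (∑ i, k i) = 0} =>
      N k.1 * ∏ i, fhat (F i) (k.1 i)) := by
  apply summable_of_finite_support
  have hS : (Set.univ.pi (fun i => {m : ℤ | fhat (F i) m ≠ 0})).Finite :=
    Set.Finite.pi fun i => hF i
  apply Set.Finite.subset (hS.preimage (Subtype.val_injective.injOn))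
  intro k hk
  simp only [Function.mem_support] at hk
  simp only [Set.mem_preimage, Set.mem_pi, Set.mem_univ, forall_true_left, Set.mem_setOf_eq]
  intro i h0
  exact hk (by rw [Finset.prod_eq_zero (Finset.mem_univ i) h0, mul_zero])

lemma Gam_swap (p : ℕ) (σ : Equiv.Perm (Fin (p+1))) (N : (Fin (p+1) → ℤ) → ℂ)
    (F : Fin (p+1) → ℝ → ℂ) (hF : ∀ i, F (σ i) = F i) :
    Gam p N F = Gam p (fun k => N (k ∘ σ)) F := by
  unfold Gam
  let e : {k : Fin (p+1) → ℤ // (∑ i, k i) = 0} ≃ {k : Fin (p+1) → ℤ // (∑ i, k i) = 0} :=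
  { toFun := fun k => ⟨k.1 ∘ σ, by
      rw [show (∑ i, (k.1 ∘ σ) i) = ∑ i, k.1 i from Equiv.sum_comp σ k.1]; exact k.2⟩
    invFun := fun k => ⟨k.1 ∘ σ.symm, by
      rw [show (∑ i, (k.1 ∘ σ.symm) i) = ∑ i, k.1 i from Equiv.sum_comp σ.symm k.1]; exact k.2⟩
    left_inv := fun k => Subtype.ext (funext fun i => by simp)
    right_inv := fun k => Subtype.ext (funext fun i => by simp) }
  rw [← Equiv.tsum_eq e (fun k => N k.1 * ∏ i, fhat (F i) (k.1 i))]
  apply tsum_congr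
  intro k
  show N (k.1 ∘ σ) * ∏ i, fhat (F i) ((k.1 ∘ σ) i) = N (k.1 ∘ σ) * ∏ i, fhat (F i) (k.1 i)
  congr 1
  calc ∏ i, fhat (F i) (k.1 (σ i)) = ∏ i, fhat (F (σ i)) (k.1 (σ i)) :=
        Finset.prod_congr rfl (fun i _ => by rw [hF i])
    _ = ∏ i, fhat (F i) (k.1 i) := by
        simpa using Equiv.prod_comp σ (fun i => fhat (F i) (k.1 i))

/-- **Symmetry lemma (third order).** If `M` is symmetric in its last two variables and
`f, g` are trigonometric polynomials, then
`Γ^(p)((ik_p)³M; f,…,f,g,g) = −(1/2)Γ^(p)((ik_{(1,p-1)})³M; f,…,f,g,g)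
  + (3/2)Γ^(p)((ik_{(1,p-1)})(ik_p)(ik_{p+1})M; f,…,f,g,g)`. -/
theorem gamma_symmetry_third_order (p : ℕ) (hp : 2 ≤ p)
    (M : (Fin (p + 1) → ℤ) → ℂ)
    (hsym : ∀ k : Fin (p + 1) → ℤ,
      M (k ∘ Equiv.swap (⟨p - 1, by omega⟩ : Fin (p + 1)) (Fin.last p)) = M k)
    (f g : ℝ → ℂ)
    (hf : Continuous f) (hfper : Function.Periodic f (2 * Real.pi))
    (hffin : {k : ℤ | fhat f k ≠ 0}.Finite)
    (hg : Continuous g) (hgper : Function.Periodic g (2 * Real.pi))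
    (hgfin : {k : ℤ | fhat g k ≠ 0}.Finite) :
    Gam p (fun k => (Complex.I * (k (⟨p - 1, by omega⟩ : Fin (p + 1)) : ℂ))^3 * M k)
        (tup p f g)
      = -(1/2 : ℂ) * Gam p (fun k => (Complex.I *
            ((∑ i ∈ Finset.univ.filter (fun i : Fin (p + 1) => (i : ℕ) < p - 1), k i : ℤ) : ℂ))^3
              * M k) (tup p f g)
        + (3/2 : ℂ) * Gam p (fun k => Complex.I *
            ((∑ i ∈ Finset.univ.filter (fun i : Fin (p + 1) => (i : ℕ) < p - 1), k i : ℤ) : ℂ)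
            * (Complex.I * (k (⟨p - 1, by omega⟩ : Fin (p + 1)) : ℂ))
            * (Complex.I * (k (Fin.last p) : ℂ)) * M k) (tup p f g) := by
  have hq : (p - 1 : ℕ) < p + 1 := by omega
  set q : Fin (p + 1) := ⟨p - 1, hq⟩ with hqdef
  set L : Fin (p + 1) := Fin.last p with hLdef
  have hqL : q ≠ L := by
    simp only [hqdef, hLdef, Fin.ne_iff_vne, Fin.val_last]
    omega
  set F : Fin (p + 1) → ℝ → ℂ := tup p f g with hFdef
  have hFfin : ∀ i, {m : ℤ | fhat (F i) m ≠ 0}.Finite := by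
    intro i
    simp only [hFdef, tup]
    split_ifs
    exacts [hffin, hgfin]
  have hFq : F q = g := by simp [hFdef, tup, hqdef]
  have hFL : F L = g := by
    simp only [hFdef, tup, hLdef, Fin.val_last]
    rw [if_neg (by omega)]
  have hswapF : ∀ i, F (Equiv.swap q L i) = F i := by
    intro i
    rcases eq_or_ne i q with rfl | hiq
    · rw [Equiv.swap_apply_left, hFL, hFq]
    rcases eq_or_ne i L with rfl | hiL
    · rw [Equiv.swap_apply_right, hFL, hFq]
    · rw [Equiv.swap_apply_of_ne_of_ne hiq hiL]
  -- decomposition of the zero-sum constraint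
  have hdecomp : ∀ k : Fin (p + 1) → ℤ, (∑ i, k i) = 0 →
      (∑ i ∈ Finset.univ.filter (fun i : Fin (p + 1) => (i : ℕ) < p - 1), k i)
        = -(k q + k L) := by
    intro k hk
    have hsplit := Finset.sum_filter_add_sum_filter_not Finset.univ
      (fun i : Fin (p + 1) => (i : ℕ) < p - 1) k
    have hset : Finset.univ.filter (fun i : Fin (p + 1) => ¬ ((i : ℕ) < p - 1)) = {q, L} := by
      ext i
      simp only [Finset.mem_filter, Finset.mem_univ, true_and, Finset.mem_insert,
        Finset.mem_singleton, Fin.ext_iff, hqdef, hLdef, Fin.val_last]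
      have := i.isLt
      omega
    rw [hset, Finset.sum_pair hqL] at hsplit
    rw [hk] at hsplit
    linarith
  -- the swap identity
  have hGswap : Gam p (fun k => (Complex.I * (k q : ℂ))^3 * M k) F
      = Gam p (fun k => (Complex.I * (k L : ℂ))^3 * M k) F := by
    rw [Gam_swap p (Equiv.swap q L) _ F hswapF]
    congr 1
    funext k
    show (Complex.I * ((k ∘ Equiv.swap q L) q : ℂ))^3 * M (k ∘ Equiv.swap q L) = _
    rw [show (k ∘ Equiv.swap q L) q = k L by simp [Equiv.swap_apply_left], hsym k]
  -- summabilities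
  have hA := summable_aux p (fun k => (Complex.I * (k q : ℂ))^3 * M k) F hFfin
  have hB := summable_aux p (fun k => (Complex.I * (k L : ℂ))^3 * M k) F hFfin
  have hN2 := summable_aux p (fun k => (Complex.I *
      ((∑ i ∈ Finset.univ.filter (fun i : Fin (p + 1) => (i : ℕ) < p - 1), k i : ℤ) : ℂ))^3
        * M k) F hFfin
  have hN3 := summable_aux p (fun k => Complex.I *
      ((∑ i ∈ Finset.univ.filter (fun i : Fin (p + 1) => (i : ℕ) < p - 1), k i : ℤ) : ℂ)
      * (Complex.I * (k q : ℂ)) * (Complex.I * (k L : ℂ)) * M k) F hFfin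
  have key : Gam p (fun k => (Complex.I * (k q : ℂ))^3 * M k) F
      + Gam p (fun k => (Complex.I * (k L : ℂ))^3 * M k) F
      = -Gam p (fun k => (Complex.I *
          ((∑ i ∈ Finset.univ.filter (fun i : Fin (p + 1) => (i : ℕ) < p - 1), k i : ℤ) : ℂ))^3
            * M k) F
        + 3 * Gam p (fun k => Complex.I *
          ((∑ i ∈ Finset.univ.filter (fun i : Fin (p + 1) => (i : ℕ) < p - 1), k i : ℤ) : ℂ)
          * (Complex.I * (k q : ℂ)) * (Complex.I * (k L : ℂ)) * M k) F := by
    unfold Gam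
    rw [← Summable.tsum_add hA hB, ← tsum_neg, ← tsum_mul_left, ← Summable.tsum_add hN2.neg (hN3.mul_left 3)]
    apply tsum_congr
    intro k
    have hs : ((∑ i ∈ Finset.univ.filter (fun i : Fin (p + 1) => (i : ℕ) < p - 1), k.1 i : ℤ) : ℂ)
        = -((k.1 q : ℂ) + (k.1 L : ℂ)) := by
      rw [hdecomp k.1 k.2]
      push_cast
      ring
    simp only [hs]
    ring
  calc Gam p (fun k => (Complex.I * (k q : ℂ))^3 * M k) F
      = (1/2 : ℂ) * (Gam p (fun k => (Complex.I * (k q : ℂ))^3 * M k) F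
          + Gam p (fun k => (Complex.I * (k L : ℂ))^3 * M k) F) := by
        rw [← hGswap]; ring
    _ = _ := by rw [key]; ring


end FifthOrderStmt8
end

section
/- Let p ≥ 2 be an integer and let γ₀, γ₁, γ₂ ∈ ℝ with γ₀ ≠ 0. There exist constants C > 0 and c > 0 (depending on p, γ₀, γ₁, γ₂) such that for every (k₁,…,k_{p+1}) ∈ Z₀^(p) with |k_p|^{4/5} ≥ C max_{1≤l≤p−1}|k_l|, one has |Φ^(p)(k₁,…,k_{p+1})| ≥ c |k_p|⁴ |k_{(1,p−1)}|. -/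
/- Lemma (oscillation estimate): |Φ^(p)(k)| ≳ |k_p|⁴ |k_{(1,p-1)}| in the
   high-frequency regime |k_p|^{4/5} ≥ C max_{1≤l≤p-1}|k_l|. -/

namespace FifthOrderStmt11

open scoped NNReal

/-- Maximum of a nonnegative real-valued family over a finset (`0` if the finset is empty). -/
noncomputable def fmax {α : Type*} (s : Finset α) (f : α → ℝ) : ℝ :=
  ((s.sup fun i => Real.toNNReal (f i) : ℝ≥0) : ℝ)

/-- The linear phase `φ(k) = i(γ₀k⁵ − γ₁k³ + γ₂k)`. -/
noncomputable def philin (γ0 γ1 γ2 : ℝ) (k : ℤ) : ℂ :=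
  Complex.I * ((γ0 : ℂ) * (k : ℂ)^5 - (γ1 : ℂ) * (k : ℂ)^3 + (γ2 : ℂ) * (k : ℂ))

/-- The resonance function `Φ^(p)(k₁,…,k_{p+1}) = φ(k_{(1,p)}) − Σ_{l=1}^p φ(k_l)`
(which depends only on `k₁,…,k_p`). -/
noncomputable def PhiN (γ0 γ1 γ2 : ℝ) (p : ℕ) (k : ℕ → ℤ) : ℂ :=
  philin γ0 γ1 γ2 (∑ l ∈ Finset.Icc 1 p, k l) - ∑ l ∈ Finset.Icc 1 p, philin γ0 γ1 γ2 (k l)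

lemma le_fmax {α : Type*} (s : Finset α) (f : α → ℝ) {i : α} (hi : i ∈ s) (h0 : 0 ≤ f i) :
    f i ≤ fmax s f := by
  have := Finset.le_sup (f := fun i => Real.toNNReal (f i)) hi
  calc f i = ((Real.toNNReal (f i) : ℝ≥0) : ℝ) := (Real.coe_toNNReal _ h0).symm
  _ ≤ _ := NNReal.coe_le_coe.2 this

lemma fmax_nonneg {α : Type*} (s : Finset α) (f : α → ℝ) : 0 ≤ fmax s f := NNReal.coe_nonneg _

lemma norm_PhiN (γ0 γ1 γ2 : ℝ) (p : ℕ) (k : ℕ → ℤ) :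
    ‖PhiN γ0 γ1 γ2 p k‖ =
      |γ0 * (((∑ l ∈ Finset.Icc 1 p, k l : ℤ) : ℝ)^5 - ∑ l ∈ Finset.Icc 1 p, ((k l : ℝ))^5)
       - γ1 * (((∑ l ∈ Finset.Icc 1 p, k l : ℤ) : ℝ)^3 - ∑ l ∈ Finset.Icc 1 p, ((k l : ℝ))^3)| := by
  have key : Complex.I * ((γ0:ℂ) * ∑ x ∈ Finset.Icc 1 p, (k x:ℂ)^5
      - (γ1:ℂ) * ∑ x ∈ Finset.Icc 1 p, (k x:ℂ)^3 + (γ2:ℂ) * ∑ x ∈ Finset.Icc 1 p, (k x:ℂ))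
      = ∑ x ∈ Finset.Icc 1 p, Complex.I * ((γ0:ℂ) * (k x:ℂ)^5 - (γ1:ℂ)*(k x:ℂ)^3 + (γ2:ℂ)*(k x:ℂ)) := by
    simp only [Finset.mul_sum, ← Finset.sum_sub_distrib, ← Finset.sum_add_distrib]
  have h : PhiN γ0 γ1 γ2 p k = Complex.I *
      (((γ0 * (((∑ l ∈ Finset.Icc 1 p, k l : ℤ) : ℝ)^5 - ∑ l ∈ Finset.Icc 1 p, ((k l : ℝ))^5)
       - γ1 * (((∑ l ∈ Finset.Icc 1 p, k l : ℤ) : ℝ)^3 - ∑ l ∈ Finset.Icc 1 p, ((k l : ℝ))^3)) : ℝ) : ℂ) := by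
    simp only [PhiN, philin, ← key]
    push_cast
    ring
  rw [h, norm_mul, Complex.norm_I, one_mul, Complex.norm_real, Real.norm_eq_abs]


/-- **Oscillation estimate.** There are `C, c > 0` such that for all
`(k₁,…,k_{p+1}) ∈ Z₀^(p)` with `|k_p|^{4/5} ≥ C max_{1≤l≤p-1}|k_l|` one has
`|Φ^(p)(k)| ≥ c |k_p|⁴ |k_{(1,p-1)}|`. -/
theorem oscillation_estimate (p : ℕ) (hp : 2 ≤ p) (γ0 γ1 γ2 : ℝ) (hγ0 : γ0 ≠ 0) :
    ∃ C : ℝ, 0 < C ∧ ∃ c : ℝ, 0 < c ∧ ∀ k : ℕ → ℤ,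
      (∑ l ∈ Finset.Icc 1 (p + 1), k l) = 0 →
      C * fmax (Finset.Icc 1 (p - 1)) (fun l => |(k l : ℝ)|) ≤ |(k p : ℝ)| ^ ((4:ℝ)/5) →
      c * |(k p : ℝ)|^4 * |((∑ l ∈ Finset.Icc 1 (p - 1), k l : ℤ) : ℝ)|
        ≤ ‖PhiN γ0 γ1 γ2 p k‖ := by
  set g : ℝ := |γ0| with hg
  have hg0 : 0 < g := abs_pos.2 hγ0
  set P : ℝ := (p : ℝ) - 1 with hPdef
  have hP1 : 1 ≤ P := by
    have : (2:ℝ) ≤ (p:ℝ) := by exact_mod_cast hp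
    simp only [hPdef]; linarith
  have hP0 : 0 < P := lt_of_lt_of_le one_pos hP1
  set K : ℝ := 10*P + 10*P^2 + 5*P^3 + P^4 + P + 10*(|γ1|/g) with hKdef
  have hK0 : 0 ≤ K := by positivity
  set C : ℝ := 1 + P + K with hCdef
  have hC1 : 1 ≤ C := by nlinarith
  have hC0 : 0 < C := lt_of_lt_of_le one_pos hC1
  have hPC : P ≤ C := by nlinarith
  have hKC : K ≤ C := by nlinarith
  refine ⟨C, hC0, g, hg0, fun k _ hhi => ?_⟩
  set M : ℝ := fmax (Finset.Icc 1 (p - 1)) (fun l => |(k l : ℝ)|) with hMdef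
  have hM0 : 0 ≤ M := fmax_nonneg _ _
  set m : ℤ := ∑ l ∈ Finset.Icc 1 (p - 1), k l with hmdef
  rcases eq_or_ne m 0 with hm | hm
  · rw [hm]
    simp [norm_nonneg]
  -- nontrivial case
  set q : ℝ := |(k p : ℝ)| with hqdef
  have hq0 : 0 ≤ q := abs_nonneg _
  set a : ℝ := |((m : ℤ) : ℝ)| with hadef
  have ha1 : 1 ≤ a := by
    rw [hadef]
    rw [← Int.cast_abs]
    exact_mod_cast Int.one_le_abs hm
  have ha0 : 0 ≤ a := le_trans zero_le_one ha1
  -- each |k l| ≤ M on Icc 1 (p-1)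
  have hkM : ∀ l ∈ Finset.Icc 1 (p-1), |(k l : ℝ)| ≤ M :=
    fun l hl => le_fmax _ (fun l => |(k l : ℝ)|) hl (abs_nonneg _)
  -- M ≥ 1
  have hM1 : 1 ≤ M := by
    obtain ⟨l, hl, hkl⟩ : ∃ l ∈ Finset.Icc 1 (p-1), k l ≠ 0 := by
      by_contra h
      push_neg at h
      exact hm (Finset.sum_eq_zero h)
    refine le_trans ?_ (hkM l hl)
    rw [← Int.cast_abs]
    exact_mod_cast Int.one_le_abs hkl
  -- q ≥ 1 and C*M ≤ q
  have hCCM : C ≤ C * M := le_mul_of_one_le_right hC0.le hM1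
  have hrw : C ≤ q ^ ((4:ℝ)/5) := le_trans hCCM hhi
  have hq1 : 1 ≤ q := by
    by_contra h
    push_neg at h
    have : q ^ ((4:ℝ)/5) < 1 := by
      rcases eq_or_lt_of_le hq0 with h0 | h0
      · rw [← h0, Real.zero_rpow (by norm_num)]; norm_num
      · calc q ^ ((4:ℝ)/5) < 1 ^ ((4:ℝ)/5) := by
              exact Real.rpow_lt_rpow hq0 h (by norm_num)
        _ = 1 := Real.one_rpow _
    linarith
  have hpow_le : q ^ ((4:ℝ)/5) ≤ q := by
    calc q ^ ((4:ℝ)/5) ≤ q ^ ((1:ℝ)) := Real.rpow_le_rpow_of_exponent_le hq1 (by norm_num)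
    _ = q := Real.rpow_one q
  have hMQ : C * M ≤ q := le_trans hhi hpow_le
  have hCq : C ≤ q := le_trans hCCM hMQ
  have hM5 : C^5 * M^5 ≤ q^4 := by
    have h1 : (C*M)^5 ≤ (q ^ ((4:ℝ)/5))^5 := pow_le_pow_left₀ (by positivity) hhi 5
    have h2 : (q ^ ((4:ℝ)/5))^5 = q^4 := by
      rw [← Real.rpow_natCast (q ^ ((4:ℝ)/5)) 5, ← Real.rpow_natCast q 4,
        ← Real.rpow_mul hq0]
      norm_num
    calc C^5*M^5 = (C*M)^5 := by ring
    _ ≤ _ := h1.trans_eq h2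
  -- a ≤ P * M
  have haPM : a ≤ P * M := by
    have h1 : a ≤ ∑ l ∈ Finset.Icc 1 (p-1), |(k l : ℝ)| := by
      rw [hadef, hmdef]
      push_cast
      exact Finset.abs_sum_le_sum_abs _ _
    have h2 : ∑ l ∈ Finset.Icc 1 (p-1), |(k l : ℝ)| ≤ (p-1) • M :=
      Finset.sum_le_card_nsmul _ _ _ (by simpa using hkM) |>.trans_eq (by rw [Nat.card_Icc]; simp)
    have h3 : ((p-1 : ℕ) : ℝ) = P := by
      rw [hPdef]; push_cast [Nat.cast_sub (by omega : 1 ≤ p)]; ring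
    calc a ≤ _ := h1
    _ ≤ (p-1) • M := h2
    _ = P * M := by rw [nsmul_eq_mul, h3]
  have hCa : C * a ≤ P * q := by
    calc C*a ≤ C*(P*M) := mul_le_mul_of_nonneg_left haPM hC0.le
    _ = P*(C*M) := by ring
    _ ≤ P*q := mul_le_mul_of_nonneg_left hMQ hP0.le
  have haq : a ≤ q := le_of_mul_le_mul_left
    (hCa.trans (mul_le_mul_of_nonneg_right hPC hq0)) hC0
  -- split top index
  have hp1 : p - 1 + 1 = p := Nat.succ_pred_eq_of_pos (Nat.lt_of_lt_of_le (by norm_num) hp)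
  have hsplit : (∑ l ∈ Finset.Icc 1 p, k l) = m + k p := by
    have h := Finset.sum_Icc_succ_top (a := 1) (b := p - 1) (by omega) k
    rw [hp1] at h
    rw [h, hmdef]
  rw [norm_PhiN]
  set mr : ℝ := ((m : ℤ) : ℝ) with hmrdef
  set kp : ℝ := ((k p : ℤ) : ℝ) with hkpdef
  set S : ℝ := ((∑ l ∈ Finset.Icc 1 p, k l : ℤ) : ℝ) with hSdef
  set T5 : ℝ := ∑ l ∈ Finset.Icc 1 p, ((k l : ℝ))^5 with hT5def
  set T3 : ℝ := ∑ l ∈ Finset.Icc 1 p, ((k l : ℝ))^3 with hT3def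
  set T5' : ℝ := ∑ l ∈ Finset.Icc 1 (p-1), ((k l : ℝ))^5 with hT5'def
  set T3' : ℝ := ∑ l ∈ Finset.Icc 1 (p-1), ((k l : ℝ))^3 with hT3'def
  have hS : S = mr + kp := by rw [hSdef, hsplit]; push_cast; ring
  have hT5 : T5 = T5' + kp^5 := by
    have h := Finset.sum_Icc_succ_top (a := 1) (b := p - 1) (by omega) (fun l => ((k l : ℝ))^5)
    rw [hp1] at h
    rw [hT5def, h, hT5'def, hkpdef]
  have hT3 : T3 = T3' + kp^3 := by
    have h := Finset.sum_Icc_succ_top (a := 1) (b := p - 1) (by omega) (fun l => ((k l : ℝ))^3)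
    rw [hp1] at h
    rw [hT3def, h, hT3'def, hkpdef]
  have hqkp : q = |kp| := hqdef
  have hamr : a = |mr| := hadef
  clear_value g P K C M m q a mr kp S T5 T3 T5' T3'
  -- bounds on the tail sums
  have hsum_pow : ∀ n : ℕ, |∑ l ∈ Finset.Icc 1 (p-1), ((k l : ℝ))^n| ≤ P * M^n := by
    intro n
    have h1 : |∑ l ∈ Finset.Icc 1 (p-1), ((k l : ℝ))^n|
        ≤ ∑ l ∈ Finset.Icc 1 (p-1), |(k l : ℝ)|^n := by
      refine (Finset.abs_sum_le_sum_abs _ _).trans (le_of_eq ?_)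
      exact Finset.sum_congr rfl fun l _ => abs_pow _ _
    have h2 : ∑ l ∈ Finset.Icc 1 (p-1), |(k l : ℝ)|^n ≤ (p-1) • (M^n) :=
      Finset.sum_le_card_nsmul _ _ _ (by
        intro l hl
        exact pow_le_pow_left₀ (abs_nonneg _) (hkM l hl) n) |>.trans_eq
        (by rw [Nat.card_Icc]; simp)
    have h3 : ((p-1 : ℕ) : ℝ) = P := by
      rw [hPdef]; push_cast [Nat.cast_sub (by omega : 1 ≤ p)]; ring
    calc |∑ l ∈ Finset.Icc 1 (p-1), ((k l : ℝ))^n| ≤ _ := h1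
    _ ≤ (p-1) • (M^n) := h2
    _ = P * M^n := by rw [nsmul_eq_mul, h3]
  have hT5'abs : |T5'| ≤ P * M^5 := by rw [hT5'def]; exact hsum_pow 5
  have hT3'abs : |T3'| ≤ P * M^3 := by rw [hT3'def]; exact hsum_pow 3
  have hPM3q : P * M^3 ≤ q^3 := by
    have hPC3 : P ≤ C^3 := hPC.trans (le_self_pow₀ hC1 (by norm_num))
    calc P*M^3 ≤ C^3*M^3 := mul_le_mul_of_nonneg_right hPC3 (pow_nonneg hM0 3)
    _ = (C*M)^3 := by ring
    _ ≤ q^3 := pow_le_pow_left₀ (mul_nonneg hC0.le hM0) hMQ 3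
  -- bound on the cubic part
  have hBabs : |S^3 - T3| ≤ 10*q^3 := by
    rw [hS, hT3]
    have hmk : |mr + kp| ≤ 2*q := by
      calc |mr + kp| ≤ |mr| + |kp| := abs_add_le _ _
      _ = a + q := by rw [hamr, hqkp]
      _ ≤ 2*q := by linarith
    have h1 : |(mr + kp)^3| ≤ 8*q^3 := by
      rw [abs_pow]
      calc |mr + kp|^3 ≤ (2*q)^3 := pow_le_pow_left₀ (abs_nonneg _) hmk 3
      _ = 8*q^3 := by ring
    have h2 : |kp^3| ≤ q^3 := by rw [abs_pow, ← hqkp]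
    calc |(mr + kp)^3 - (T3' + kp^3)| ≤ |(mr + kp)^3| + |T3' + kp^3| := abs_sub _ _
    _ ≤ |(mr + kp)^3| + (|T3'| + |kp^3|) := by linarith [abs_add_le T3' (kp^3)]
    _ ≤ 8*q^3 + (q^3 + q^3) := by linarith [hT3'abs.trans hPM3q]
    _ = 10*q^3 := by ring
  -- abs equalities for the quintic terms
  have e1 : |10*kp^3*mr^2| = 10*q^3*a^2 := by
    rw [hqkp, hamr, abs_mul, abs_mul, abs_pow, abs_pow]; norm_num
  have e2 : |10*kp^2*mr^3| = 10*q^2*a^3 := by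
    rw [hqkp, hamr, abs_mul, abs_mul, abs_pow, abs_pow]; norm_num
  have e3 : |5*kp*mr^4| = 5*q*a^4 := by
    rw [hqkp, hamr, abs_mul, abs_mul, abs_pow]; norm_num
  have e4 : |mr^5| = a^5 := by rw [hamr, abs_pow]
  have hWabs : |10*kp^3*mr^2 + 10*kp^2*mr^3 + 5*kp*mr^4 + mr^5 - T5'|
      ≤ 10*q^3*a^2 + 10*q^2*a^3 + 5*q*a^4 + a^5 + P*M^5 := by
    calc |10*kp^3*mr^2 + 10*kp^2*mr^3 + 5*kp*mr^4 + mr^5 - T5'|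
        ≤ |10*kp^3*mr^2 + 10*kp^2*mr^3 + 5*kp*mr^4 + mr^5| + |T5'| := abs_sub _ _
    _ ≤ |10*kp^3*mr^2 + 10*kp^2*mr^3 + 5*kp*mr^4| + |mr^5| + |T5'| := by
        linarith [abs_add_le (10*kp^3*mr^2 + 10*kp^2*mr^3 + 5*kp*mr^4) (mr^5)]
    _ ≤ |10*kp^3*mr^2 + 10*kp^2*mr^3| + |5*kp*mr^4| + |mr^5| + |T5'| := by
        linarith [abs_add_le (10*kp^3*mr^2 + 10*kp^2*mr^3) (5*kp*mr^4)]
    _ ≤ |10*kp^3*mr^2| + |10*kp^2*mr^3| + |5*kp*mr^4| + |mr^5| + |T5'| := by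
        linarith [abs_add_le (10*kp^3*mr^2) (10*kp^2*mr^3)]
    _ ≤ 10*q^3*a^2 + 10*q^2*a^3 + 5*q*a^4 + a^5 + P*M^5 := by
        rw [e1, e2, e3, e4]; linarith
  -- the error bound
  have hEbound : |γ0*(5*kp^4*mr) - (γ0*(S^5 - T5) - γ1*(S^3 - T3))|
      ≤ g*(10*q^3*a^2 + 10*q^2*a^3 + 5*q*a^4 + a^5 + P*M^5) + |γ1| *(10*q^3) := by
    have hid : γ0*(5*kp^4*mr) - (γ0*(S^5 - T5) - γ1*(S^3 - T3))
        = (-γ0)*(10*kp^3*mr^2 + 10*kp^2*mr^3 + 5*kp*mr^4 + mr^5 - T5') + γ1*(S^3 - T3) := by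
      rw [hS, hT5]; ring
    rw [hid]
    calc |(-γ0)*(10*kp^3*mr^2 + 10*kp^2*mr^3 + 5*kp*mr^4 + mr^5 - T5') + γ1*(S^3 - T3)|
        ≤ |(-γ0)*(10*kp^3*mr^2 + 10*kp^2*mr^3 + 5*kp*mr^4 + mr^5 - T5')| + |γ1*(S^3 - T3)| :=
          abs_add_le _ _
    _ = g * |10*kp^3*mr^2 + 10*kp^2*mr^3 + 5*kp*mr^4 + mr^5 - T5'| + |γ1| * |S^3 - T3| := by
          rw [abs_mul, abs_mul, abs_neg, hg]
    _ ≤ g*(10*q^3*a^2 + 10*q^2*a^3 + 5*q*a^4 + a^5 + P*M^5) + |γ1| *(10*q^3) := by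
          have := mul_le_mul_of_nonneg_left hWabs hg0.le
          have := mul_le_mul_of_nonneg_left hBabs (abs_nonneg γ1)
          linarith
  -- the C-scaled individual bounds
  have b1 : C*(10*q^3*a^2) ≤ 10*P*(q^4*a) := by
    calc C*(10*q^3*a^2) = 10*(q^3*a)*(C*a) := by ring
    _ ≤ 10*(q^3*a)*(P*q) := mul_le_mul_of_nonneg_left hCa
        (mul_nonneg (by norm_num) (mul_nonneg (pow_nonneg hq0 3) ha0))
    _ = 10*P*(q^4*a) := by ring
  have hCa2 : (C*a)^2 ≤ (P*q)^2 := pow_le_pow_left₀ (mul_nonneg hC0.le ha0) hCa 2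
  have hCa3 : (C*a)^3 ≤ (P*q)^3 := pow_le_pow_left₀ (mul_nonneg hC0.le ha0) hCa 3
  have hCa4 : (C*a)^4 ≤ (P*q)^4 := pow_le_pow_left₀ (mul_nonneg hC0.le ha0) hCa 4
  have b2 : C*(10*q^2*a^3) ≤ 10*P^2*(q^4*a) := by
    calc C*(10*q^2*a^3) ≤ C^2*(10*q^2*a^3) :=
        mul_le_mul_of_nonneg_right (le_self_pow₀ hC1 (by norm_num))
          (mul_nonneg (mul_nonneg (by norm_num) (pow_nonneg hq0 2)) (pow_nonneg ha0 3))
    _ = 10*(q^2*a)*(C*a)^2 := by ring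
    _ ≤ 10*(q^2*a)*(P*q)^2 := mul_le_mul_of_nonneg_left hCa2
        (mul_nonneg (by norm_num) (mul_nonneg (pow_nonneg hq0 2) ha0))
    _ = 10*P^2*(q^4*a) := by ring
  have b3 : C*(5*q*a^4) ≤ 5*P^3*(q^4*a) := by
    calc C*(5*q*a^4) ≤ C^3*(5*q*a^4) :=
        mul_le_mul_of_nonneg_right (le_self_pow₀ hC1 (by norm_num))
          (mul_nonneg (mul_nonneg (by norm_num) hq0) (pow_nonneg ha0 4))
    _ = 5*(q*a)*(C*a)^3 := by ring
    _ ≤ 5*(q*a)*(P*q)^3 := mul_le_mul_of_nonneg_left hCa3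
        (mul_nonneg (by norm_num) (mul_nonneg hq0 ha0))
    _ = 5*P^3*(q^4*a) := by ring
  have b4 : C*(a^5) ≤ P^4*(q^4*a) := by
    calc C*(a^5) ≤ C^4*(a^5) :=
        mul_le_mul_of_nonneg_right (le_self_pow₀ hC1 (by norm_num)) (pow_nonneg ha0 5)
    _ = a*(C*a)^4 := by ring
    _ ≤ a*(P*q)^4 := mul_le_mul_of_nonneg_left hCa4 ha0
    _ = P^4*(q^4*a) := by ring
  have b5 : C*(P*M^5) ≤ P*(q^4*a) := by
    calc C*(P*M^5) ≤ C^5*(P*M^5) :=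
        mul_le_mul_of_nonneg_right (le_self_pow₀ hC1 (by norm_num))
          (mul_nonneg hP0.le (pow_nonneg hM0 5))
    _ = P*(C^5*M^5) := by ring
    _ ≤ P*(q^4) := mul_le_mul_of_nonneg_left hM5 hP0.le
    _ ≤ P*(q^4*a) :=
        mul_le_mul_of_nonneg_left (le_mul_of_one_le_right (pow_nonneg hq0 4) ha1) hP0.le
  have b6 : C*(|γ1| *(10*q^3)) ≤ 10*(|γ1|/g)*(g*(q^4*a)) := by
    calc C*(|γ1| *(10*q^3)) ≤ q*(|γ1| *(10*q^3)) :=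
        mul_le_mul_of_nonneg_right hCq
          (mul_nonneg (abs_nonneg _) (mul_nonneg (by norm_num) (pow_nonneg hq0 3)))
    _ = 10*|γ1| *q^4 := by ring
    _ ≤ 10*|γ1| *q^4*a := le_mul_of_one_le_right
        (mul_nonneg (mul_nonneg (by norm_num) (abs_nonneg _)) (pow_nonneg hq0 4)) ha1
    _ = 10*(|γ1|/g)*(g*(q^4*a)) := by field_simp
  -- combine
  have hEC : C * |γ0*(5*kp^4*mr) - (γ0*(S^5 - T5) - γ1*(S^3 - T3))| ≤ C * (g*(q^4*a)) := by
    calc C * |γ0*(5*kp^4*mr) - (γ0*(S^5 - T5) - γ1*(S^3 - T3))|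
        ≤ C * (g*(10*q^3*a^2 + 10*q^2*a^3 + 5*q*a^4 + a^5 + P*M^5) + |γ1| *(10*q^3)) :=
          mul_le_mul_of_nonneg_left hEbound hC0.le
    _ = g*(C*(10*q^3*a^2)) + g*(C*(10*q^2*a^3)) + g*(C*(5*q*a^4)) + g*(C*(a^5))
        + g*(C*(P*M^5)) + C*(|γ1| *(10*q^3)) := by ring
    _ ≤ g*(10*P*(q^4*a)) + g*(10*P^2*(q^4*a)) + g*(5*P^3*(q^4*a)) + g*(P^4*(q^4*a))
        + g*(P*(q^4*a)) + 10*(|γ1|/g)*(g*(q^4*a)) := by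
          have c1 := mul_le_mul_of_nonneg_left b1 hg0.le
          have c2 := mul_le_mul_of_nonneg_left b2 hg0.le
          have c3 := mul_le_mul_of_nonneg_left b3 hg0.le
          have c4 := mul_le_mul_of_nonneg_left b4 hg0.le
          have c5 := mul_le_mul_of_nonneg_left b5 hg0.le
          linarith
    _ = (K*(q^4*a))*g := by rw [hKdef]; ring
    _ ≤ (C*(q^4*a))*g := by
          apply mul_le_mul_of_nonneg_right _ hg0.le
          exact mul_le_mul_of_nonneg_right hKC (mul_nonneg (pow_nonneg hq0 4) ha0)
    _ = C * (g*(q^4*a)) := by ring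
  have hEfin : |γ0*(5*kp^4*mr) - (γ0*(S^5 - T5) - γ1*(S^3 - T3))| ≤ g*(q^4*a) :=
    le_of_mul_le_mul_left hEC hC0
  have hmain : |γ0*(5*kp^4*mr)| = 5*g*(q^4*a) := by
    rw [hg, hqkp, hamr, abs_mul, abs_mul, abs_mul, abs_pow,
      abs_of_nonneg (by norm_num : (0:ℝ) ≤ 5)]
    ring
  have hlow := abs_sub_abs_le_abs_sub (γ0*(5*kp^4*mr)) (γ0*(S^5 - T5) - γ1*(S^3 - T3))
  have hpos : 0 ≤ g*(q^4*a) := mul_nonneg hg0.le (mul_nonneg (pow_nonneg hq0 4) ha0)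
  rw [hmain] at hlow
  calc g * q^4 * a = g*(q^4*a) := by ring
  _ ≤ |γ0*(S^5 - T5) - γ1*(S^3 - T3)| := by linarith


end FifthOrderStmt11
end
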